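/- arXiv:2407.11757 — 3 statements merged into one kernel-verified Lean document; each statement's English description precedes it below -/
import Mathlib

section
/- Let λ, μ ∈ gl_2(F). The 4-dimensional algebra a(λ,μ) with basis a,b,x,y and nonzero products [a,x] = λ₁₁x + λ₁₂y, [a,y] = λ₂₁x + λ₂₂y, [b,x] = μ₁₁x + μ₁₂y, [b,y] = μ₂₁x + μ₂₂y is a left Leibniz algebra if and only if the matrices λ and μ commute: λμ = μλ. -/
/-- The bracket of the 4-dimensional algebra `a(λ,μ)` on coordinates `(a, b, x, y)`:
`[a,x] = λ₁₁x + λ₁₂y`, `[a,y] = λ₂₁x + λ₂₂y`, `[b,x] = μ₁₁x + μ₁₂y`, `[b,y] = μ₂₁x + μ₂₂y`,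
all other products of basis vectors being zero. -/
def aBr {F : Type*} [Field F] (lam mu : Matrix (Fin 2) (Fin 2) F) :
    (F × F × F × F) → (F × F × F × F) → (F × F × F × F) :=
  fun u v =>
    (0, 0,
      u.1 * (lam 0 0 * v.2.2.1 + lam 1 0 * v.2.2.2)
        + u.2.1 * (mu 0 0 * v.2.2.1 + mu 1 0 * v.2.2.2),
      u.1 * (lam 0 1 * v.2.2.1 + lam 1 1 * v.2.2.2)
        + u.2.1 * (mu 0 1 * v.2.2.1 + mu 1 1 * v.2.2.2))

/-- `a(λ,μ)` is a left Leibniz algebra iff `λμ = μλ`. -/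
theorem aBr_leibniz_iff_commute {F : Type*} [Field F] (lam mu : Matrix (Fin 2) (Fin 2) F) :
    (∀ u v w : F × F × F × F,
        aBr lam mu u (aBr lam mu v w)
          = aBr lam mu (aBr lam mu u v) w + aBr lam mu v (aBr lam mu u w))
      ↔ lam * mu = mu * lam := by
  constructor
  · intro h
    have h1 := congrArg (fun p => p.2.2.1) (h (1,0,0,0) (0,1,0,0) (0,0,1,0))
    have h2 := congrArg (fun p => p.2.2.2) (h (1,0,0,0) (0,1,0,0) (0,0,1,0))
    have h3 := congrArg (fun p => p.2.2.1) (h (1,0,0,0) (0,1,0,0) (0,0,0,1))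
    have h4 := congrArg (fun p => p.2.2.2) (h (1,0,0,0) (0,1,0,0) (0,0,0,1))
    simp [aBr] at h1 h2 h3 h4
    ext i j
    fin_cases i <;> fin_cases j <;>
      simp [Matrix.mul_apply, Fin.sum_univ_two] <;> [linear_combination -h1; linear_combination -h2; linear_combination -h3; linear_combination -h4]
  · intro h u v w
    have e : ∀ i j, (lam * mu) i j = (mu * lam) i j := fun i j => by rw [h]
    have h1 := e 0 0; have h2 := e 0 1; have h3 := e 1 0; have h4 := e 1 1
    simp [Matrix.mul_apply, Fin.sum_univ_two] at h1 h2 h3 h4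
    simp only [aBr, Prod.mk.injEq, Prod.mk_add_mk]
    refine ⟨by ring, by ring, by linear_combination (u.2.1 * v.1 - u.1 * v.2.1) * (w.2.2.1 * h1 + w.2.2.2 * h3) , by linear_combination (u.2.1 * v.1 - u.1 * v.2.1) * (w.2.2.1 * h2 + w.2.2.2 * h4)⟩
end

section
/- Let λ, μ, λ', μ' ∈ gl_2(F) with λμ = μλ and λ'μ' = μ'λ'. If span(λ, μ) = span(λ', μ') as subspaces of gl_2(F), then the Leibniz algebras a(λ,μ) and a(λ',μ') are isomorphic. -/
/-!
The bracket `[u, v]` of `a(λ,μ)` depends on `u` only through `u_a λ + u_b μ = φ (u_a, u_b)`, where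
`φ : F² → gl₂(F)`, `(s, t) ↦ s λ + t μ`, has range `span(λ, μ)`. Two linear maps out of a
finite-dimensional space with the same range differ by an automorphism `g` of the source: split off
the kernels, whose dimensions agree by rank–nullity. Applying `g` to the `(a, b)`-coordinates and
fixing `x, y` is then an isomorphism `a(λ,μ) ≃ a(λ',μ')`.
-/

namespace LinearMap

theorem range_coprod_toSpanSingleton {R M : Type*} [Semiring R] [AddCommMonoid M] [Module R M]
    (x y : M) :
    range ((toSpanSingleton R M x).coprod (toSpanSingleton R M y)) = Submodule.span R {x, y} := by
  rw [range_coprod, ← span_singleton_eq_range, ← span_singleton_eq_range, Submodule.span_insert]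

variable {K V W : Type*} [DivisionRing K] [AddCommGroup V] [Module K V] [AddCommGroup W]
  [Module K W]

theorem exists_linearEquiv_prod_ker_range (φ : V →ₗ[K] W) :
    ∃ Φ : V ≃ₗ[K] ker φ × range φ, ∀ v, ((Φ v).2 : W) = φ v := by
  obtain ⟨C, hC⟩ := (ker φ).exists_isCompl
  refine ⟨equivProdOfSurjectiveOfIsCompl ((ker φ).projectionOnto C hC) φ.rangeRestrict
    (Submodule.range_projectionOnto hC) φ.range_rangeRestrict ?_, fun _ => rfl⟩
  rw [Submodule.ker_projectionOnto, ker_rangeRestrict]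
  exact hC.symm

theorem exists_linearEquiv_comp_eq_of_range_eq [FiniteDimensional K V] {φ ψ : V →ₗ[K] W}
    (h : range φ = range ψ) : ∃ g : V ≃ₗ[K] V, ψ ∘ₗ g = φ := by
  obtain ⟨Φ, hΦ⟩ := φ.exists_linearEquiv_prod_ker_range
  obtain ⟨Ψ, hΨ⟩ := ψ.exists_linearEquiv_prod_ker_range
  have hker : Module.finrank K (ker φ) = Module.finrank K (ker ψ) := by
    have := φ.finrank_range_add_finrank_ker
    have := ψ.finrank_range_add_finrank_ker
    rw [h] at *
    omega
  refine ⟨Φ ≪≫ₗ (LinearEquiv.ofFinrankEq _ _ hker).prodCongr (LinearEquiv.ofEq _ _ h) ≪≫ₗ Ψ.symm,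
    LinearMap.ext fun v => ?_⟩
  simp [← hΨ, ← hΦ]

end LinearMap

theorem aBr_congr {F : Type*} [Field F] {lam mu lam' mu' : Matrix (Fin 2) (Fin 2) F}
    {u v u' v' : F × F × F × F} (hu : u.1 • lam + u.2.1 • mu = u'.1 • lam' + u'.2.1 • mu')
    (hv : v.2.2 = v'.2.2) : aBr lam mu u v = aBr lam' mu' u' v' := by
  have hent (i j : Fin 2) :
      u.1 * lam i j + u.2.1 * mu i j = u'.1 * lam' i j + u'.2.1 * mu' i j := by
    simpa using congrFun (congrFun hu i) j
  simp only [aBr, hv, Prod.mk.injEq, true_and]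
  constructor
  · linear_combination v'.2.2.1 * hent 0 0 + v'.2.2.2 * hent 1 0
  · linear_combination v'.2.2.1 * hent 0 1 + v'.2.2.2 * hent 1 1

theorem aBr_iso_of_span_eq_general {F : Type*} [Field F]
    (lam mu lam' mu' : Matrix (Fin 2) (Fin 2) F)
    (hspan : Submodule.span F ({lam, mu} : Set (Matrix (Fin 2) (Fin 2) F))
      = Submodule.span F ({lam', mu'} : Set (Matrix (Fin 2) (Fin 2) F))) :
    ∃ e : (F × F × F × F) ≃ₗ[F] (F × F × F × F),
      ∀ u v : F × F × F × F, e (aBr lam mu u v) = aBr lam' mu' (e u) (e v) := by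
  open LinearMap in
  obtain ⟨g, hg⟩ := exists_linearEquiv_comp_eq_of_range_eq
    (φ := (toSpanSingleton F _ lam).coprod (toSpanSingleton F _ mu))
    (ψ := (toSpanSingleton F _ lam').coprod (toSpanSingleton F _ mu'))
    (by rw [range_coprod_toSpanSingleton, range_coprod_toSpanSingleton, hspan])
  let e := (LinearEquiv.prodAssoc F F F (F × F)).symm ≪≫ₗ
    g.prodCongr (LinearEquiv.refl F (F × F)) ≪≫ₗ LinearEquiv.prodAssoc F F F (F × F)
  have he (w : F × F × F × F) : e w = ((g (w.1, w.2.1)).1, (g (w.1, w.2.1)).2, w.2.2) := rfl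
  refine ⟨e, fun u v => ?_⟩
  calc e (aBr lam mu u v) = aBr lam mu u v := by simp [he, aBr, Prod.mk_zero_zero]
    _ = aBr lam' mu' (e u) (e v) := aBr_congr ?_ rfl
  simpa [he] using (LinearMap.congr_fun hg (u.1, u.2.1)).symm

/-- If `span(λ,μ) = span(λ',μ')`, then the Leibniz algebras `a(λ,μ)` and
`a(λ',μ')` are isomorphic. -/
theorem aBr_iso_of_span_eq {F : Type*} [Field F]
    (lam mu lam' mu' : Matrix (Fin 2) (Fin 2) F)
    (hc : lam * mu = mu * lam) (hc' : lam' * mu' = mu' * lam')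
    (hspan : Submodule.span F ({lam, mu} : Set (Matrix (Fin 2) (Fin 2) F))
      = Submodule.span F ({lam', mu'} : Set (Matrix (Fin 2) (Fin 2) F))) :
    ∃ e : (F × F × F × F) ≃ₗ[F] (F × F × F × F),
      ∀ u v : F × F × F × F, e (aBr lam mu u v) = aBr lam' mu' (e u) (e v) :=
  aBr_iso_of_span_eq_general lam mu lam' mu' hspan
end

section
/- Let L be a finite-dimensional non-abelian left Leibniz algebra and A an abelian subalgebra of codimension k > 1 which is a maximal (proper) subalgebra of L. Then there exists a subspace L₁ ⊊ L such that L = A ⊕ L₁ (direct sum of vector spaces) and [A, L₁] = L₁. -/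
/-! The left multiplications `L_a = [a, -]`, `a ∈ A`, commute, so `A` acts on `L` through an
abelian Lie subalgebra of `End L`, and `L = L₀ ⊕ L₁` is the Fitting decomposition of this action.
The Leibniz identity says that each `L_a` is a derivation, so `L₀` is a subalgebra containing `A`,
and by maximality `L₀ = A` or `L₀ = L`.

If `L₀ = A`, then `L₁` is the required complement: the positive Fitting component is the limit of
the lower central series, hence `[A, L₁] = L₁`.

If `L₀ = L`, then `A` acts nilpotently on `L / A`, which yields `x ∉ A` with `[A, x] ⊆ A`. Either
`x` or some `[x, b]` (`b ∈ A`) lies outside `A` in the two-sided idealizer of `A`, a subalgebra, so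
`A` is an ideal. Since squares annihilate from the left, there is `u ∉ A` with `[u, u] ∈ A`; then
`A + F u` is a subalgebra, hence all of `L`, and `A` has codimension `1`, contradicting `k > 1`. -/

/-- The span of all products `[a,b]` with `a ∈ A`, `b ∈ B`. -/
def brSpan {F L : Type*} [Field F] [AddCommGroup L] [Module F L]
    (br : L →ₗ[F] L →ₗ[F] L) (A B : Submodule F L) : Submodule F L :=
  Submodule.span F {z | ∃ a ∈ A, ∃ b ∈ B, z = br a b}

open Finset

namespace LieModule

variable {R L M : Type*} [CommRing R] [LieRing L] [LieAlgebra R L] [AddCommGroup M] [Module R M]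
  [LieRingModule L M] [LieModule R L M]

lemma lie_top_posFittingComp [LieRing.IsNilpotent L] [IsNoetherian R M] [IsArtinian R M] :
    ⁅(⊤ : LieIdeal R L), posFittingComp R L M⁆ = posFittingComp R L M := by
  obtain ⟨l, hl⟩ := Filter.eventually_atTop.mp (eventually_iInf_lowerCentralSeries_eq R L M)
  rw [← iInf_lowerCentralSeries_eq_posFittingComp, hl l le_rfl, ← lowerCentralSeries_succ,
    ← hl l le_rfl, hl (l + 1) l.le_succ]

lemma exists_notMem_forall_lie_mem [IsNilpotent L M] {N : LieSubmodule R L M} (hN : N ≠ ⊤) :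
    ∃ m ∉ N, ∀ x : L, ⁅x, m⁆ ∈ N := by
  have : IsNilpotent L (M ⧸ N) := by
    obtain ⟨k, hk⟩ := (isNilpotent_iff R L M).mp inferInstance
    exact (isNilpotent_quotient_iff R L M N).mpr ⟨k, hk ▸ bot_le⟩
  have : Nontrivial (M ⧸ N) := by
    obtain ⟨m, hm⟩ := SetLike.exists_not_mem_of_ne_top N hN
    exact ⟨_, 0, (LieSubmodule.Quotient.mk_eq_zero' (N := N)).not.mpr hm⟩
  have := nontrivial_max_triv_of_isNilpotent R L (M ⧸ N)
  obtain ⟨⟨v, hv⟩, hv0⟩ := exists_ne (0 : maxTrivSubmodule R L (M ⧸ N))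
  obtain ⟨m, rfl⟩ := LieSubmodule.Quotient.surjective_mk' N v
  rw [mem_maxTrivSubmodule] at hv
  refine ⟨m, fun hm ↦ hv0 ?_, fun x ↦ ?_⟩
  · ext
    exact (LieSubmodule.Quotient.mk_eq_zero' (N := N)).mpr hm
  · exact (LieSubmodule.Quotient.mk_eq_zero' (N := N)).mp (hv x)

end LieModule

theorem Submodule.finrank_quotient_le_one_of_sup_span_singleton_eq_top {F L : Type*} [Field F]
    [AddCommGroup L] [Module F L] {A : Submodule F L} {u : L} (h : A ⊔ span F {u} = ⊤) :
    Module.finrank F (L ⧸ A) ≤ 1 := by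
  rw [← map_mkQ_eq_top, map_span, Set.image_singleton] at h
  calc Module.finrank F (L ⧸ A) = Module.finrank F (⊤ : Submodule F (L ⧸ A)) :=
        (finrank_top F (L ⧸ A)).symm
    _ = Module.finrank F (span F {A.mkQ u}) := by rw [h]
    _ ≤ 1 := by
      simpa only [Set.toFinset_singleton, Finset.card_singleton] using
        finrank_span_le_card ({A.mkQ u} : Set (L ⧸ A))

namespace LeftLeibniz

variable {F L : Type*} [Field F] [AddCommGroup L] [Module F L] (br : L →ₗ[F] L →ₗ[F] L)

def IsDerivation (D : Module.End F L) : Prop :=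
  ∀ x y, D (br x y) = br (D x) y + br x (D y)

def IsLeftLeibniz : Prop :=
  ∀ x, IsDerivation br (br x)

def IsSubalgebra (S : Submodule F L) : Prop :=
  ∀ x ∈ S, ∀ y ∈ S, br x y ∈ S

def idealizer (A : Submodule F L) : Submodule F L :=
  (A.compatibleMaps A).comap br ⊓ (A.compatibleMaps A).comap br.flip

variable {br}

theorem mem_idealizer {A : Submodule F L} {z : L} :
    z ∈ idealizer br A ↔ (∀ a ∈ A, br z a ∈ A) ∧ ∀ a ∈ A, br a z ∈ A :=
  Iff.rfl

theorem isSubalgebra_of_br_eq_zero {A : Submodule F L} (hA : ∀ a ∈ A, ∀ b ∈ A, br a b = 0) :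
    IsSubalgebra br A :=
  fun a ha b hb ↦ (hA a ha b hb).symm ▸ A.zero_mem

theorem le_idealizer {A : Submodule F L} (hA : IsSubalgebra br A) : A ≤ idealizer br A :=
  fun a ha ↦ mem_idealizer.mpr ⟨fun _ hb ↦ hA a ha _ hb, fun _ hb ↦ hA _ hb a ha⟩

theorem isSubalgebra_sup_span_singleton {A : Submodule F L} (hA : IsSubalgebra br A) {u : L}
    (hu : u ∈ idealizer br A) (huu : br u u ∈ A) :
    IsSubalgebra br (A ⊔ Submodule.span F {u}) := by
  obtain ⟨hur, hul⟩ := mem_idealizer.mp hu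
  rintro y hy z hz
  obtain ⟨a, ha, _, hs, rfl⟩ := Submodule.mem_sup.mp hy
  obtain ⟨c, rfl⟩ := Submodule.mem_span_singleton.mp hs
  obtain ⟨a', ha', _, hs', rfl⟩ := Submodule.mem_sup.mp hz
  obtain ⟨c', rfl⟩ := Submodule.mem_span_singleton.mp hs'
  apply Submodule.mem_sup_left
  simp only [map_add, map_smul, LinearMap.add_apply, LinearMap.smul_apply]
  exact A.add_mem (A.add_mem (hA a ha a' ha') (A.smul_mem c (hur a' ha')))
    (A.smul_mem c' (A.add_mem (hul a ha) (A.smul_mem c huu)))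

theorem IsDerivation.pow_apply {D : Module.End F L} (hD : IsDerivation br D) (n : ℕ) (x y : L) :
    (D ^ n) (br x y) =
      ∑ ij ∈ antidiagonal n, n.choose ij.1 • br ((D ^ ij.1) x) ((D ^ ij.2) y) := by
  induction n with
  | zero => simp
  | succ n ih =>
    rw [sum_antidiagonal_choose_succ_nsmul (fun i j ↦ br ((D ^ i) x) ((D ^ j) y)) n]
    unfold IsDerivation at hD
    simp only [pow_succ', Module.End.mul_apply, ih, map_sum, map_nsmul, hD, nsmul_add,
      sum_add_distrib]
    rw [add_comm, add_left_cancel_iff, sum_congr rfl]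
    rintro ⟨i, j⟩ hij
    rw [Nat.choose_symm_of_eq_add (HasAntidiagonal.mem_antidiagonal.mp hij).symm]

theorem IsDerivation.pow_add_apply_eq_zero {D : Module.End F L} (hD : IsDerivation br D)
    {p q : ℕ} {x y : L} (hx : (D ^ p) x = 0) (hy : (D ^ q) y = 0) :
    (D ^ (p + q)) (br x y) = 0 := by
  rw [hD.pow_apply]
  refine sum_eq_zero fun ij hij ↦ ?_
  rw [HasAntidiagonal.mem_antidiagonal] at hij
  rcases le_or_gt p ij.1 with hi | hi
  · simp [Module.End.pow_map_zero_of_le hi hx]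
  · simp [Module.End.pow_map_zero_of_le (by omega : q ≤ ij.2) hy]

namespace IsLeftLeibniz

theorem br_br_self (hleib : IsLeftLeibniz br) (z w : L) : br (br z z) w = 0 := by
  simpa using hleib z z w

theorem isSubalgebra_idealizer (hleib : IsLeftLeibniz br) (A : Submodule F L) :
    IsSubalgebra br (idealizer br A) := by
  rintro y ⟨hyr, hyl⟩ z ⟨hzr, hzl⟩
  refine mem_idealizer.mpr ⟨fun a ha ↦ ?_, fun a ha ↦ ?_⟩
  · have h : br (br y z) a = br y (br z a) - br z (br y a) := by
      rw [hleib y z a]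
      abel
    rw [h]
    exact A.sub_mem (hyr (hzr ha)) (hzr (hyr ha))
  · rw [hleib a y z]
    exact A.add_mem (hzl (hyl ha)) (hyr (hzl ha))

theorem exists_notMem_br_self_mem (hleib : IsLeftLeibniz br) {A : Submodule F L} (hA : A ≠ ⊤) :
    ∃ u ∉ A, br u u ∈ A := by
  obtain ⟨w, hw⟩ := SetLike.exists_not_mem_of_ne_top A hA
  by_cases hww : br w w ∈ A
  · exact ⟨w, hw, hww⟩
  · exact ⟨br w w, hww, by rw [hleib.br_br_self]; exact A.zero_mem⟩

theorem br_mem_idealizer (hleib : IsLeftLeibniz br) {A : Submodule F L}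
    (hA : ∀ a ∈ A, ∀ b ∈ A, br a b = 0) {x b : L}
    (hx : ∀ a ∈ A, br a x ∈ A) (hb : b ∈ A) : br x b ∈ idealizer br A := by
  refine mem_idealizer.mpr ⟨fun a ha ↦ ?_, fun a ha ↦ ?_⟩
  -- `[[x, b], a] = -[b, [x, a]] = -[[b, x], a] = 0`, since `[b, a] = 0` and `[b, x] ∈ A`.
  · have h := hleib x b a
    rw [hleib b x a, hA b hb a ha, hA _ (hx b hb) a ha] at h
    simp only [map_zero, add_zero] at h
    rw [← h]
    exact A.zero_mem
  · rw [hleib a x b, hA _ (hx a ha) b hb, hA a ha b hb, map_zero, add_zero]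
    exact A.zero_mem

theorem exists_notMem_mem_idealizer (hleib : IsLeftLeibniz br) {A : Submodule F L}
    (hA : ∀ a ∈ A, ∀ b ∈ A, br a b = 0) {x : L} (hxA : x ∉ A) (hx : ∀ a ∈ A, br a x ∈ A) :
    ∃ y ∉ A, y ∈ idealizer br A := by
  by_cases h : ∀ b ∈ A, br x b ∈ A
  · exact ⟨x, hxA, mem_idealizer.mpr ⟨h, hx⟩⟩
  · push Not at h
    obtain ⟨b, hb, hxb⟩ := h
    exact ⟨br x b, hxb, hleib.br_mem_idealizer hA hx hb⟩

theorem finrank_quotient_le_one (hleib : IsLeftLeibniz br) {A : Submodule F L}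
    (hA : IsSubalgebra br A) (hA' : A ≠ ⊤)
    (hmax : ∀ S : Submodule F L, IsSubalgebra br S → A ≤ S → S = A ∨ S = ⊤)
    (hideal : idealizer br A = ⊤) : Module.finrank F (L ⧸ A) ≤ 1 := by
  obtain ⟨u, huA, huu⟩ := hleib.exists_notMem_br_self_mem hA'
  refine Submodule.finrank_quotient_le_one_of_sup_span_singleton_eq_top (u := u) ?_
  refine (hmax _ (isSubalgebra_sup_span_singleton hA (hideal ▸ Submodule.mem_top) huu)
    le_sup_left).resolve_left fun h ↦ huA ?_
  exact h ▸ Submodule.mem_sup_right (Submodule.mem_span_singleton_self u)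

end IsLeftLeibniz

section LeftMultiplication

open LieModule

attribute [local instance] LieRing.ofAssociativeRing

theorem IsLeftLeibniz.lie_br_eq (hleib : IsLeftLeibniz br) (a b : L) :
    ⁅br a, br b⁆ = br (br a b) := by
  ext z
  rw [LieRing.of_associative_ring_bracket, LinearMap.sub_apply, Module.End.mul_apply,
    Module.End.mul_apply, hleib a b z, add_sub_cancel_right]

variable (br) in
def leftMulLieSubalgebra (hleib : IsLeftLeibniz br) (A : Submodule F L)
    (hA : ∀ a ∈ A, ∀ b ∈ A, br a b = 0) : LieSubalgebra F (Module.End F L) where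
  toSubmodule := A.map br
  lie_mem' := by
    rintro _ _ ⟨a, ha, rfl⟩ ⟨b, hb, rfl⟩
    rw [hleib.lie_br_eq, hA a ha b hb, map_zero]
    exact (A.map br).zero_mem

variable (hleib : IsLeftLeibniz br) {A : Submodule F L} (hA : ∀ a ∈ A, ∀ b ∈ A, br a b = 0)

local notation "K" => leftMulLieSubalgebra br hleib A hA

theorem mem_leftMulLieSubalgebra {f : Module.End F L} : f ∈ K ↔ ∃ a ∈ A, br a = f :=
  Iff.rfl

instance : IsLieAbelian K := by
  refine ⟨fun ⟨_, a, ha, hf⟩ ⟨_, b, hb, hg⟩ ↦ ?_⟩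
  subst hf hg
  ext1
  exact (hleib.lie_br_eq a b).trans (by rw [hA a ha b hb, map_zero]; rfl)

theorem mem_genWeightSpace_zero_leftMul {m : L} :
    m ∈ genWeightSpace L (0 : K → F) ↔ ∀ a ∈ A, ∃ n : ℕ, (br a ^ n) m = 0 := by
  rw [mem_genWeightSpace]
  simp [mem_leftMulLieSubalgebra]

theorem le_genWeightSpace_zero_leftMul :
    A ≤ (genWeightSpace L (0 : K → F) : Submodule F L) :=
  fun m hm ↦
    (mem_genWeightSpace_zero_leftMul hleib hA).mpr fun a ha ↦ ⟨1, by simp [hA a ha m hm]⟩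

theorem isSubalgebra_genWeightSpace_zero_leftMul :
    IsSubalgebra br (genWeightSpace L (0 : K → F) : Submodule F L) := by
  intro x hx y hy
  rw [LieSubmodule.mem_toSubmodule, mem_genWeightSpace_zero_leftMul] at hx hy ⊢
  intro a ha
  obtain ⟨p, hp⟩ := hx a ha
  obtain ⟨q, hq⟩ := hy a ha
  exact ⟨p + q, (hleib a).pow_add_apply_eq_zero hp hq⟩

theorem brSpan_posFittingComp_leftMul [FiniteDimensional F L] :
    brSpan br A (posFittingComp F K L) = posFittingComp F K L := by
  conv_rhs => rw [← lie_top_posFittingComp, LieSubmodule.lieIdeal_oper_eq_linear_span']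
  rw [brSpan]
  congr 1
  ext z
  constructor
  · rintro ⟨a, ha, b, hb, rfl⟩
    exact ⟨⟨br a, a, ha, rfl⟩, trivial, b, hb, rfl⟩
  · rintro ⟨⟨_, a, ha, rfl⟩, -, b, hb, rfl⟩
    exact ⟨a, ha, b, hb, rfl⟩

theorem exists_isCompl_brSpan_eq [FiniteDimensional F L]
    (h0 : (genWeightSpace L (0 : K → F) : Submodule F L) = A) (hA' : A ≠ ⊤) :
    ∃ L₁ : Submodule F L, L₁ ≠ ⊤ ∧ A ⊓ L₁ = ⊥ ∧ A ⊔ L₁ = ⊤ ∧ brSpan br A L₁ = L₁ := by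
  have hc := LieSubmodule.isCompl_toSubmodule.mpr
    (isCompl_genWeightSpace_zero_posFittingComp F K L)
  rw [h0] at hc
  refine ⟨_, fun htop ↦ hA' ?_, hc.inf_eq_bot, hc.sup_eq_top,
    brSpan_posFittingComp_leftMul hleib hA⟩
  have hbot : A = ⊥ := eq_bot_of_isCompl_top (htop ▸ hc)
  rw [← h0, eq_top_iff]
  intro m _
  rw [LieSubmodule.mem_toSubmodule, mem_genWeightSpace_zero_leftMul]
  intro a ha
  rw [hbot, Submodule.mem_bot] at ha
  exact ⟨1, by simp [ha]⟩

theorem exists_notMem_forall_br_mem [FiniteDimensional F L]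
    (h0 : (genWeightSpace L (0 : K → F) : Submodule F L) = ⊤) (hA' : A ≠ ⊤) :
    ∃ x ∉ A, ∀ a ∈ A, br a x ∈ A := by
  have : IsNilpotent K L := by
    rw [← isNilpotent_of_top_iff' (R := F), ← (LieSubmodule.toSubmodule_eq_top _).mp h0]
    infer_instance
  let N : LieSubmodule F K L :=
    { A with
      lie_mem := by
        rintro ⟨_, a, ha, rfl⟩ m hm
        simp [hA a ha m hm] }
  obtain ⟨x, hx, hxN⟩ := exists_notMem_forall_lie_mem (N := N)
    fun h ↦ hA' ((LieSubmodule.toSubmodule_eq_top N).mpr h)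
  exact ⟨x, hx, fun a ha ↦ hxN ⟨br a, a, ha, rfl⟩⟩

theorem idealizer_eq_top_of_genWeightSpace_zero_eq_top [FiniteDimensional F L]
    (h0 : (genWeightSpace L (0 : K → F) : Submodule F L) = ⊤) (hA' : A ≠ ⊤)
    (hmax : ∀ S : Submodule F L, IsSubalgebra br S → A ≤ S → S = A ∨ S = ⊤) :
    idealizer br A = ⊤ := by
  obtain ⟨x, hxA, hx⟩ := exists_notMem_forall_br_mem hleib hA h0 hA'
  obtain ⟨y, hyA, hy⟩ := hleib.exists_notMem_mem_idealizer hA hxA hx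
  exact (hmax _ (hleib.isSubalgebra_idealizer A)
    (le_idealizer (isSubalgebra_of_br_eq_zero hA))).resolve_left fun h ↦ hyA (h ▸ hy)

end LeftMultiplication

end LeftLeibniz

open LeftLeibniz in
theorem fitting_decomposition_of_maximal_abelian_general {F L : Type*} [Field F] [AddCommGroup L]
    [Module F L] [FiniteDimensional F L] (br : L →ₗ[F] L →ₗ[F] L)
    (leib : ∀ x y z : L, br x (br y z) = br (br x y) z + br y (br x z))
    (A : Submodule F L)
    (habelian : ∀ a ∈ A, ∀ b ∈ A, br a b = 0)
    (hproper : A ≠ ⊤)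
    (hmax : ∀ S : Submodule F L, (∀ x ∈ S, ∀ y ∈ S, br x y ∈ S) → A ≤ S → S = A ∨ S = ⊤)
    (k : ℕ) (hk : 1 < k) (hcodim : Module.finrank F (L ⧸ A) = k) :
    ∃ L₁ : Submodule F L, L₁ ≠ ⊤ ∧ A ⊓ L₁ = ⊥ ∧ A ⊔ L₁ = ⊤ ∧ brSpan br A L₁ = L₁ := by
  have hleib : IsLeftLeibniz br := leib
  rcases hmax _ (isSubalgebra_genWeightSpace_zero_leftMul hleib habelian)
      (le_genWeightSpace_zero_leftMul hleib habelian) with h0 | h0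
  · exact exists_isCompl_brSpan_eq hleib habelian h0 hproper
  · have := hleib.finrank_quotient_le_one (isSubalgebra_of_br_eq_zero habelian) hproper hmax
      (idealizer_eq_top_of_genWeightSpace_zero_eq_top hleib habelian h0 hproper hmax)
    omega

/-- Lemma 2.1: If `L` is a finite-dimensional non-abelian left Leibniz
algebra and `A` is an abelian subalgebra of codimension `k > 1` which is a maximal
subalgebra, then there is a proper subspace `L₁` with `L = A ⊕ L₁` and `[A, L₁] = L₁`. -/
theorem fitting_decomposition_of_maximal_abelian {F L : Type*} [Field F] [AddCommGroup L]
    [Module F L] [FiniteDimensional F L] (br : L →ₗ[F] L →ₗ[F] L)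
    (leib : ∀ x y z : L, br x (br y z) = br (br x y) z + br y (br x z))
    (hnonab : ∃ x y : L, br x y ≠ 0)
    (A : Submodule F L)
    (habelian : ∀ a ∈ A, ∀ b ∈ A, br a b = 0)
    (hproper : A ≠ ⊤)
    (hmax : ∀ S : Submodule F L, (∀ x ∈ S, ∀ y ∈ S, br x y ∈ S) → A ≤ S → S = A ∨ S = ⊤)
    (k : ℕ) (hk : 1 < k) (hcodim : Module.finrank F (L ⧸ A) = k) :
    ∃ L₁ : Submodule F L, L₁ ≠ ⊤ ∧ A ⊓ L₁ = ⊥ ∧ A ⊔ L₁ = ⊤ ∧ brSpan br A L₁ = L₁ :=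
  fitting_decomposition_of_maximal_abelian_general br leib A habelian hproper hmax k hk hcodim
end
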